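/- Let G and B be finite sets. For each g ∈ G let Z ≥ 0, S_g > 0 and m_g > 0 (the number of base stations connected to g), and for each b ∈ B let z_b ≥ 0 with Σ_b z_b = Z, and fixed attack totals a_b ≥ 0. Let K = { d = (d_b)_{b∈B} : Σ_b d_b ≤ P^d, 0 ≤ d_b ≤ a_b for all b } with P^d ≥ 0, and suppose d* maximizes Σ_b z_b d_b over K. Then, with the attacker strategy p*_g = S_g/(2 m_g) for all g, the pair (d*, p*) satisfies the Stackelberg conditions: (i) p* maximizes the attacker payoff U(p) = Σ_g Z p_g (1 − p_g m_g/S_g) − Σ_b z_b d*_b over all p with 0 ≤ p_g and p_g m_g ≤ S_g; and (ii) d* maximizes the defender payoff u^d(d) = −Σ_b z_b (a_b − d_b) over K, where a_b is the total equilibrium deviation received at base station b. -/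
import Mathlib


/-- Theorem 1 combined with the Stackelberg-equilibrium
definition, stealthiness at the power source level: with total impact
`Z = Σ_b z_b ≥ 0`, safe generations `S g > 0`, numbers of connected base
stations `m g > 0`, equilibrium attack totals `a b ≥ 0` at the base stations,
budget `P^d ≥ 0`, feasible set
`K = {d : Σ_b d_b ≤ P^d, 0 ≤ d_b ≤ a_b}`, and `d*` a maximizer of
`Σ_b z_b d_b` over `K`, the pair `(d*, p*)` with `p* g = S g/(2 m g)`
satisfies the Stackelberg conditions: (i) `p*` maximizes the attacker payoff
`U(p) = Σ_g Z p_g (1 − p_g m_g/S_g) − Σ_b z_b d*_b` over all stealthy-feasible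
`p`, and (ii) `d*` maximizes the defender payoff
`u^d(d) = −Σ_b z_b (a_b − d_b)` over `K`. -/
theorem stmt_15 (G B : Type*) [Fintype G] [Fintype B]
    (Z : ℝ) (S : G → ℝ) (m : G → ℕ) (z : B → ℝ) (a : B → ℝ) (Pd : ℝ)
    (hZ : 0 ≤ Z) (hS : ∀ g, 0 < S g) (hm : ∀ g, 0 < m g)
    (hz : ∀ b, 0 ≤ z b) (hzZ : (∑ b, z b) = Z) (ha : ∀ b, 0 ≤ a b)
    (hPd : 0 ≤ Pd)
    (K : Set (B → ℝ))
    (hK : K = {d : B → ℝ | (∑ b, d b) ≤ Pd ∧ ∀ b, 0 ≤ d b ∧ d b ≤ a b})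
    (dstar : B → ℝ) (hdK : dstar ∈ K)
    (hdmax : ∀ d ∈ K, (∑ b, z b * d b) ≤ (∑ b, z b * dstar b)) :
    (∀ p : G → ℝ, (∀ g, 0 ≤ p g ∧ p g * (m g : ℝ) ≤ S g) →
      (∑ g, Z * p g * (1 - p g * (m g : ℝ) / S g)) - (∑ b, z b * dstar b) ≤
      (∑ g, Z * (S g / (2 * (m g : ℝ))) *
        (1 - (S g / (2 * (m g : ℝ))) * (m g : ℝ) / S g)) - (∑ b, z b * dstar b)) ∧
    (∀ d ∈ K, -(∑ b, z b * (a b - d b)) ≤ -(∑ b, z b * (a b - dstar b))) := by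
  constructor
  · intro p hp
    apply sub_le_sub_right
    apply Finset.sum_le_sum
    intro g _
    have hSg := hS g
    have hmg : (0:ℝ) < (m g : ℝ) := by exact_mod_cast hm g
    rw [mul_assoc, mul_assoc]
    apply mul_le_mul_of_nonneg_left _ hZ
    have key : (m g / S g) * (p g - S g / (2 * m g))^2 ≥ 0 := by positivity
    have h1 : S g / (2 * m g) * (1 - S g / (2 * m g) * m g / S g)
        - p g * (1 - p g * m g / S g) = (m g / S g) * (p g - S g / (2 * m g))^2 := by
      field_simp
      ring
    linarith
  · intro d hd
    have := hdmax d hd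
    have e : ∀ f : B → ℝ, -(∑ b, z b * (a b - f b)) = (∑ b, z b * f b) - (∑ b, z b * a b) := by
      intro f
      rw [← Finset.sum_sub_distrib]
      · rw [← Finset.sum_neg_distrib]
        apply Finset.sum_congr rfl
        intro b _; ring
    rw [e d, e dstar]
    linarith
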